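/- Let f : (Fin 30 → ℝ) → ℝ be the fourth modified Griewank function f(x) = (1/10000)·∑_{n=1}^{30} x_n² - ∑_{n=1}^{30} ln(2 + cos(x_n/√n)) + 30·ln 3. Then f(x) ≥ 0 for all x ∈ ℝ³⁰, and f(x) = 0 if and only if x = 0. -/
import Mathlib


open Real Finset

/-- The fourth modified Griewank function on ℝ³⁰:
`f(x) = (1/10000) ∑ x_n² - ∑ ln(2 + cos(x_n/√n)) + 30 ln 3`,
with `Fin 30` index `n` corresponding to the coordinate `n+1`. -/
noncomputable def griewankMod4 (x : Fin 30 → ℝ) : ℝ :=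
  (1 / 10000) * ∑ n : Fin 30, (x n) ^ 2 -
    ∑ n : Fin 30, Real.log (2 + Real.cos (x n / Real.sqrt ((n : ℝ) + 1))) +
    30 * Real.log 3

lemma log_part_nonneg (t : ℝ) : 0 ≤ Real.log 3 - Real.log (2 + Real.cos t) := by
  have h1 : (0 : ℝ) < 2 + Real.cos t := by nlinarith [Real.neg_one_le_cos t]
  have h2 : 2 + Real.cos t ≤ 3 := by nlinarith [Real.cos_le_one t]
  have := Real.log_le_log h1 h2
  linarith

lemma griewank_sum (x : Fin 30 → ℝ) :
    griewankMod4 x = ∑ n : Fin 30,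
      ((x n) ^ 2 / 10000 +
        (Real.log 3 - Real.log (2 + Real.cos (x n / Real.sqrt ((n : ℝ) + 1))))) := by
  unfold griewankMod4
  rw [Finset.sum_add_distrib, Finset.sum_sub_distrib, Finset.sum_const, Finset.card_univ,
    Fintype.card_fin, ← Finset.sum_div, nsmul_eq_mul]
  push_cast
  ring

lemma term_nonneg (x : Fin 30 → ℝ) (n : Fin 30) :
    0 ≤ (x n) ^ 2 / 10000 +
        (Real.log 3 - Real.log (2 + Real.cos (x n / Real.sqrt ((n : ℝ) + 1)))) := by
  have := log_part_nonneg (x n / Real.sqrt ((n : ℝ) + 1))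
  positivity

theorem griewankMod4_global_min :
    (∀ x : Fin 30 → ℝ, 0 ≤ griewankMod4 x) ∧
    (∀ x : Fin 30 → ℝ, griewankMod4 x = 0 ↔ x = 0) := by
  constructor
  · intro x
    rw [griewank_sum]
    exact Finset.sum_nonneg fun n _ => term_nonneg x n
  · intro x
    constructor
    · intro h
      rw [griewank_sum] at h
      have hz := (Finset.sum_eq_zero_iff_of_nonneg (fun n _ => term_nonneg x n)).mp h
      funext n
      have hn := hz n (Finset.mem_univ n)
      have h1 := log_part_nonneg (x n / Real.sqrt ((n : ℝ) + 1))
      have : (x n) ^ 2 = 0 := by nlinarith [sq_nonneg (x n)]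
      simpa using pow_eq_zero_iff (n := 2) (by norm_num) |>.mp this
    · rintro rfl
      rw [griewank_sum]
      norm_num
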